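/- Let H and K be groups, with K acting on H on the right by automorphisms (written h^k), and suppose i : F → K is a homomorphism from a subgroup F ≤ H such that h^{i(f)} = f⁻¹hf for all f ∈ F, h ∈ H; F is stable under the K-action; and i(f^k) = k⁻¹ i(f) k. If X ⊆ H is a set of representatives for the right cosets F\H, then the map K × X → (K ⋉ H)/Ξ, (k, x) ↦ [(k, x)], is a bijection, where Ξ = { (i(f), f⁻¹) : f ∈ F }. -/

import Mathlib

/-- A right action of `G` on `S` by group automorphisms, i.e. an
anti-homomorphism `G → Aut S`; we write `act φ g` for `φ^g`. -/
structure RightAutAction (S G : Type*) [Group S] [Group G] where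
  act : S → G → S
  act_mul : ∀ φ ψ g, act (φ * ψ) g = act φ g * act ψ g
  act_one : ∀ φ, act φ 1 = φ
  act_act : ∀ φ g g', act (act φ g) g' = act φ (g * g')

theorem RightAutAction.act_one_left {S G : Type*} [Group S] [Group G]
    (α : RightAutAction S G) (g : G) : α.act 1 g = 1 := by
  have h2 : α.act 1 g = α.act 1 g * α.act 1 g := by
    simpa using (α.act_mul 1 1 g).symm
  simpa using h2

theorem RightAutAction.act_inv {S G : Type*} [Group S] [Group G]
    (α : RightAutAction S G) (φ : S) (g : G) :
    α.act φ⁻¹ g = (α.act φ g)⁻¹ := by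
  have h := α.act_mul φ⁻¹ φ g
  rw [inv_mul_cancel, α.act_one_left] at h
  exact eq_inv_of_mul_eq_one_left h.symm

/-- The semidirect product `G ⋉ S` determined by the right action `α`,
with multiplication `(g, φ)(g', φ') = (g g', φ^{g'} φ')`.  (A type synonym
for `G × S` carrying this group structure.) -/
def SD (S G : Type*) [Group S] [Group G] (_α : RightAutAction S G) : Type _ := G × S

/-- The element `(g, φ)` of `G ⋉ S`. -/
def SD.mk {S G : Type*} [Group S] [Group G] {α : RightAutAction S G}
    (g : G) (φ : S) : SD S G α := (g, φ)

instance SD.instGroup {S G : Type*} [Group S] [Group G] (α : RightAutAction S G) :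
    Group (SD S G α) where
  mul x y := SD.mk (Prod.fst (x : G × S) * Prod.fst (y : G × S))
    (α.act (Prod.snd (x : G × S)) (Prod.fst (y : G × S)) * Prod.snd (y : G × S))
  one := SD.mk 1 1
  inv x := SD.mk (Prod.fst (x : G × S))⁻¹
    (α.act (Prod.snd (x : G × S)) (Prod.fst (x : G × S))⁻¹)⁻¹
  mul_assoc := by
    rintro ⟨g1, s1⟩ ⟨g2, s2⟩ ⟨g3, s3⟩
    refine Prod.ext ?_ ?_
    · show (g1 * g2) * g3 = g1 * (g2 * g3)
      exact mul_assoc ..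
    · show α.act (α.act s1 g2 * s2) g3 * s3 =
        α.act s1 (g2 * g3) * (α.act s2 g3 * s3)
      simp [α.act_mul, α.act_act, mul_assoc]
  one_mul := by
    rintro ⟨g, s⟩
    show SD.mk ((1 : G) * g) (α.act (1 : S) g * s) = (⟨g, s⟩ : G × S)
    simp [SD.mk, RightAutAction.act_one_left]
    rfl
  mul_one := by
    rintro ⟨g, s⟩
    show SD.mk (g * (1 : G)) (α.act s (1 : G) * (1 : S)) = (⟨g, s⟩ : G × S)
    simp [SD.mk, α.act_one]
    rfl
  inv_mul_cancel := by
    rintro ⟨g, s⟩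
    show SD.mk _ _ = SD.mk 1 1
    simp [SD.mk, α.act_inv, α.act_act, α.act_one]
    rfl

/-!
Since `h^{i(f)} = f⁻¹ h f`, right multiplication by the element `(i f, f⁻¹)` of `Ξ` sends `(k, h)` to
`(k i(f), f⁻¹ h)`, so two elements lie in the same left coset of `Ξ` exactly when they
are related by such a move. Writing `h = f x` with `x ∈ X`, the coset of `(k, h)` contains
`(k i(f), x)`; and if `(k', x')` with `x' ∈ X` is obtained from `(k, x)`, then `f x' = x`,
which forces `f = 1` by uniqueness of the decomposition `H = F X`.
-/

namespace SD

variable {S G : Type*} [Group S] [Group G] {α : RightAutAction S G}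

theorem mk_mul_mk (g g' : G) (φ φ' : S) :
    (mk g φ * mk g' φ' : SD S G α) = mk (g * g') (α.act φ g' * φ') :=
  rfl

theorem mk_inj {g g' : G} {φ φ' : S} :
    (mk g φ : SD S G α) = mk g' φ' ↔ g = g' ∧ φ = φ' :=
  Prod.mk.injEq .. ▸ Iff.rfl

theorem mk_surjective : Function.Surjective (fun p : G × S => (mk p.1 p.2 : SD S G α)) :=
  fun p => ⟨p, rfl⟩

end SD

section Reps

variable {H K : Type*} [Group H] [Group K] {α : RightAutAction H K}
  {F : Subgroup H} {i : F →* K}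

theorem SD.mk_mul_mk_map_inv (hA2 : ∀ (f : F) (h : H), α.act h (i f) = (f : H)⁻¹ * h * (f : H))
    (k : K) (h : H) (f : F) :
    (SD.mk k h * SD.mk (i f) (f : H)⁻¹ : SD H K α) = SD.mk (k * i f) ((f : H)⁻¹ * h) := by
  rw [SD.mk_mul_mk, hA2, mul_inv_cancel_right]

theorem SD.quotient_mk_eq_iff
    (hA2 : ∀ (f : F) (h : H), α.act h (i f) = (f : H)⁻¹ * h * (f : H))
    {Ξ : Subgroup (SD H K α)}
    (hΞ : (Ξ : Set (SD H K α)) = {p : SD H K α | ∃ f : F, p = SD.mk (i f) (f : H)⁻¹})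
    {k k' : K} {h h' : H} :
    (QuotientGroup.mk (SD.mk k h) : SD H K α ⧸ Ξ) = QuotientGroup.mk (SD.mk k' h') ↔
      ∃ f : F, k' = k * i f ∧ h' = (f : H)⁻¹ * h := by
  rw [QuotientGroup.eq, ← SetLike.mem_coe, hΞ]
  refine exists_congr fun f => ?_
  rw [inv_mul_eq_iff_eq_mul, SD.mk_mul_mk_map_inv hA2, SD.mk_inj]

end Reps

theorem bijection_K_times_reps_general
    (H K : Type*) [Group H] [Group K] (α : RightAutAction H K)
    (F : Subgroup H) (i : F →* K)
    (hA2 : ∀ (f : F) (h : H), α.act h (i f) = (f : H)⁻¹ * h * (f : H))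
    (X : Set H)
    (hX : Function.Bijective (fun q : F × X => (q.1 : H) * (q.2 : H)))
    (Ξ : Subgroup (SD H K α))
    (hΞ : (Ξ : Set (SD H K α)) =
      {p : SD H K α | ∃ f : F, p = SD.mk (i f) (f : H)⁻¹}) :
    Function.Bijective (fun p : K × X =>
      (QuotientGroup.mk (SD.mk p.1 (p.2 : H)) : SD H K α ⧸ Ξ)) := by
  constructor
  · rintro ⟨k, x⟩ ⟨k', x'⟩ hq
    dsimp only at hq
    obtain ⟨f, hk, hx⟩ := (SD.quotient_mk_eq_iff hA2 hΞ).mp hq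
    have hfx : (f : H) * x' = ((1 : F) : H) * x := by
      rw [hx, mul_inv_cancel_left, OneMemClass.coe_one, one_mul]
    obtain ⟨rfl, rfl⟩ := Prod.mk.inj (hX.injective hfx)
    rw [hk, map_one, mul_one]
  · intro q
    obtain ⟨p, rfl⟩ := QuotientGroup.mk_surjective q
    obtain ⟨⟨k, h⟩, rfl⟩ := SD.mk_surjective p
    obtain ⟨⟨f, x⟩, hfx⟩ := hX.surjective h
    refine ⟨(k * i f, x), (SD.quotient_mk_eq_iff hA2 hΞ).mpr ⟨f⁻¹, ?_, ?_⟩⟩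
    · rw [map_inv, mul_inv_cancel_right]
    · rw [← hfx, InvMemClass.coe_inv, inv_inv]

theorem bijection_K_times_reps
    (H K : Type*) [Group H] [Group K] (α : RightAutAction H K)
    (F : Subgroup H) (i : F →* K)
    (hA2 : ∀ (f : F) (h : H), α.act h (i f) = (f : H)⁻¹ * h * (f : H))
    (hA3 : ∀ (f : F) (k : K), α.act (f : H) k ∈ F)
    (hA3' : ∀ (f : F) (k : K), i ⟨α.act (f : H) k, hA3 f k⟩ = k⁻¹ * i f * k)
    (X : Set H)
    (hX : Function.Bijective (fun q : F × X => (q.1 : H) * (q.2 : H)))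
    (Ξ : Subgroup (SD H K α))
    (hΞ : (Ξ : Set (SD H K α)) =
      {p : SD H K α | ∃ f : F, p = SD.mk (i f) (f : H)⁻¹})
    [Ξ.Normal] :
    Function.Bijective (fun p : K × X =>
      (QuotientGroup.mk (SD.mk p.1 (p.2 : H)) : SD H K α ⧸ Ξ)) :=
  bijection_K_times_reps_general H K α F i hA2 X hX Ξ hΞ
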